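/- For any positive integers i and k and any partition λ, u_{i+1}(u_{i+2}(u_i^k(u_{i+1}(λ)))) = u_{i+2}(u_{i+1}(u_i^k(u_{i+1}(λ)))). -/

import Mathlib

/-- A partition, represented by its column lengths (the conjugate):
`c i` is the number of boxes in column `i`. -/
def IsPartition (c : ℕ+ → ℕ) : Prop :=
  (∀ i : ℕ+, c (i + 1) ≤ c i) ∧ ∃ N : ℕ+, ∀ i : ℕ+, N ≤ i → c i = 0

open Classical in
/-- The Schur operator `u_i`: add a box to column `i` if the result is a
partition, else `none` (representing `0`). -/
noncomputable def addBox (i : ℕ+) (c : ℕ+ → ℕ) : Option (ℕ+ → ℕ) :=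
  if IsPartition (Function.update c i (c i + 1)) then
    some (Function.update c i (c i + 1))
  else none

/-- `u_x = u_{x_1} ∘ ⋯ ∘ u_{x_l}` for a word `x = x_1 ⋯ x_l`. -/
noncomputable def schurWord (x : List ℕ+) (c : ℕ+ → ℕ) : Option (ℕ+ → ℕ) :=
  x.foldr (fun i o => o.bind (addBox i)) (some c)

/-- `α_i(x)`: the maximum over suffixes `s` of `x` of `w_{i+1}(s) - w_i(s)`. -/
def alpha (i : ℕ+) (x : List ℕ+) : ℕ :=
  (x.tails.map (fun s => s.count (i + 1) - s.count i)).foldr max 0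

/-! After `u_i^k u_{i+1}` column `i + 1` is strictly longer than column `i + 2`: the box added to
column `i + 1` makes it so, and boxes added to column `i` touch neither column. On such a partition
`u_{i+1}` and `u_{i+2}` commute: `u_{i+2}` always succeeds, and in either order the box in column
`i + 1` is legal exactly when column `i` is longer than column `i + 1`. -/

lemma PNat.add_one_add_one (t : ℕ+) : t + 1 + 1 = t + 2 := by
  rw [add_assoc]; rfl

lemma isPartition_update_succ_iff {μ : ℕ+ → ℕ} (hμ : IsPartition μ) (t : ℕ+) :
    IsPartition (Function.update μ (t + 1) (μ (t + 1) + 1)) ↔ μ (t + 1) < μ t := by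
  obtain ⟨hmono, N, hN⟩ := hμ
  constructor
  · intro h
    have := h.1 t
    rwa [Function.update_self, Function.update_of_ne (PNat.lt_add_right t 1).ne,
      Nat.succ_le_iff] at this
  · intro h
    refine ⟨fun m => ?_, N + (t + 1), fun m hm => ?_⟩
    · rcases eq_or_ne m t with rfl | hmt
      · rw [Function.update_self, Function.update_of_ne (PNat.lt_add_right m 1).ne]
        omega
      rw [Function.update_of_ne (fun e => hmt (add_right_cancel e))]
      rcases eq_or_ne m (t + 1) with rfl | hm1
      · rw [Function.update_self]
        exact (hmono (t + 1)).trans (Nat.le_succ _)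
      · rw [Function.update_of_ne hm1]
        exact hmono m
    · have hm1 : m ≠ t + 1 := ((PNat.lt_add_left (t + 1) N).trans_le hm).ne'
      rw [Function.update_of_ne hm1, hN m ((PNat.lt_add_right N (t + 1)).le.trans hm)]

lemma addBox_succ {μ : ℕ+ → ℕ} (hμ : IsPartition μ) (t : ℕ+) :
    addBox (t + 1) μ =
      if μ (t + 1) < μ t then some (Function.update μ (t + 1) (μ (t + 1) + 1)) else none := by
  unfold addBox
  simp only [isPartition_update_succ_iff hμ]

lemma addBox_eq_some {j : ℕ+} {c d : ℕ+ → ℕ} (h : addBox j c = some d) :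
    IsPartition d ∧ d = Function.update c j (c j + 1) := by
  unfold addBox at h
  split_ifs at h with hp
  obtain rfl := Option.some_inj.mp h
  exact ⟨hp, rfl⟩

lemma schurWord_cons (j : ℕ+) (x : List ℕ+) (c : ℕ+ → ℕ) :
    schurWord (j :: x) c = (schurWord x c).bind (addBox j) := rfl

lemma schurWord_append (x y : List ℕ+) (c : ℕ+ → ℕ) :
    schurWord (x ++ y) c = (schurWord y c).bind (schurWord x) := by
  induction x with
  | nil => exact (Option.bind_fun_some _).symm
  | cons j x ih => rw [List.cons_append, schurWord_cons, ih, Option.bind_assoc]; rfl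

lemma isPartition_of_schurWord_eq_some {x : List ℕ+} {c μ : ℕ+ → ℕ} (hc : IsPartition c)
    (h : schurWord x c = some μ) : IsPartition μ := by
  induction x generalizing μ with
  | nil => exact Option.some_inj.mp h ▸ hc
  | cons j x ih =>
    rw [schurWord_cons, Option.bind_eq_some_iff] at h
    obtain ⟨ν, -, hν⟩ := h
    exact (addBox_eq_some hν).1

lemma addBox_apply_of_ne {j m : ℕ+} {c d : ℕ+ → ℕ} (h : addBox j c = some d) (hm : m ≠ j) :
    d m = c m := by
  rw [(addBox_eq_some h).2, Function.update_of_ne hm]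

lemma schurWord_pair_comm {μ : ℕ+ → ℕ} (hμ : IsPartition μ) (t : ℕ+)
    (h : μ (t + 2) < μ (t + 1)) :
    schurWord [t + 1, t + 2] μ = schurWord [t + 2, t + 1] μ := by
  show (addBox (t + 2) μ).bind (addBox (t + 1)) = (addBox (t + 1) μ).bind (addBox (t + 2))
  rw [← PNat.add_one_add_one] at h ⊢
  have hμ' := (isPartition_update_succ_iff hμ (t + 1)).mpr h
  have h1 : t + 1 ≠ t + 1 + 1 := (PNat.lt_add_right _ 1).ne
  have h0 : t ≠ t + 1 + 1 := (PNat.lt_add_right t 2).ne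
  rw [addBox_succ hμ (t + 1), if_pos h, Option.bind_some, addBox_succ hμ' t, addBox_succ hμ t,
    Function.update_of_ne h1, Function.update_of_ne h0]
  by_cases hlt : μ (t + 1) < μ t
  · have hμ'' := (isPartition_update_succ_iff hμ t).mpr hlt
    rw [if_pos hlt, if_pos hlt, Option.bind_some, addBox_succ hμ'' (t + 1), Function.update_self,
      Function.update_of_ne h1.symm, if_pos (h.trans (Nat.lt_succ_self _)), Function.update_comm h1]
  · simp only [if_neg hlt, Option.bind_none]

lemma lt_of_schurWord_replicate_append {i : ℕ+} {c μ : ℕ+ → ℕ} (hc : IsPartition c) (n : ℕ)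
    (h : schurWord (List.replicate n i ++ [i + 1]) c = some μ) : μ (i + 2) < μ (i + 1) := by
  induction n generalizing μ with
  | zero =>
    obtain ⟨-, rfl⟩ := addBox_eq_some h
    rw [← PNat.add_one_add_one, Function.update_self,
      Function.update_of_ne (PNat.lt_add_right _ 1).ne']
    exact Nat.lt_succ_of_le (hc.1 (i + 1))
  | succ n ih =>
    rw [List.replicate_succ, List.cons_append, schurWord_cons, Option.bind_eq_some_iff] at h
    obtain ⟨ν, hν, hμ⟩ := h
    rw [addBox_apply_of_ne hμ (PNat.lt_add_right i 2).ne',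
      addBox_apply_of_ne hμ (PNat.lt_add_right i 1).ne']
    exact ih hν

theorem stmt16 (i k : ℕ+) (c : ℕ+ → ℕ) (hc : IsPartition c) :
    schurWord ([i + 1, i + 2] ++ List.replicate (k : ℕ) i ++ [i + 1]) c =
      schurWord ([i + 2, i + 1] ++ List.replicate (k : ℕ) i ++ [i + 1]) c := by
  simp only [List.append_assoc]
  rw [schurWord_append [i + 1, i + 2], schurWord_append [i + 2, i + 1]]
  cases hμ : schurWord (List.replicate k i ++ [i + 1]) c with
  | none => rfl
  | some μ =>
    exact schurWord_pair_comm (isPartition_of_schurWord_eq_some hc hμ) i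
      (lt_of_schurWord_replicate_append hc k hμ)
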